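/- Let n ≥ 1 and let m_1, …, m_n be odd positive integers. If P ∈ ℂ[X, X^{−1}] is a Laurent polynomial and R = P/Q_n ∈ RatFunc ℂ, then there exists a Laurent polynomial P′ ∈ ℂ[X, X^{−1}] with 𝔉(R) = P′/Q_n. In other words, the class of rational functions with denominator Q_n and Laurent-polynomial numerator is invariant under 𝔉. -/

import Mathlib

/-! On Laurent expansions `𝔉` is the operator `f ↦ ∑ₖ a_{2k+1}(f) Xᵏ`, which satisfies
`𝔉(g(X²) f) = g 𝔉(f)` for every polynomial `g` and maps polynomials to polynomials. The
denominator `D = Xˢ Q_n` divides `D(X²)`, because `X^m - 1` divides `X^{2m} - 1`; writing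
`D(X²) = D h`, the relation `D R = P` gives `D(X²) R = h P`, and applying `𝔉` yields
`D 𝔉(R) = 𝔉(h P)`, a polynomial. -/

/-- The `n`-th coefficient of the Laurent expansion at `0` of a rational function. -/
noncomputable def coeffL (R : RatFunc ℂ) (n : ℤ) : ℂ :=
  ((R : LaurentSeries ℂ)).coeff n

/-- A rational function is of the form `P/Q` with `P` a Laurent polynomial, i.e. of the
form `P₀/(X^s Q)` with `P₀` an ordinary polynomial and `s : ℕ`. -/
def IsLaurentOver (Q : Polynomial ℂ) (R : RatFunc ℂ) : Prop :=
  ∃ (P : Polynomial ℂ) (s : ℕ),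
    R = algebraMap (Polynomial ℂ) (RatFunc ℂ) P /
      (RatFunc.X ^ s * algebraMap (Polynomial ℂ) (RatFunc ℂ) Q)

open Polynomial HahnSeries
open scoped LaurentSeries

namespace LaurentSeries

section Semiring

variable {R : Type*} [Semiring R]

def oddCoeffs (f : R⸨X⸩) : R⸨X⸩ where
  coeff k := f.coeff (2 * k + 1)
  isPWO_support' := by
    intro u
    obtain ⟨a, b, hab, hle⟩ :=
      f.isPWO_support.exists_lt (f := fun n => 2 * (u n).1 + 1) fun n => (u n).2
    exact ⟨a, b, hab, show (u a).1 ≤ (u b).1 by omega⟩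

@[simp]
theorem coeff_oddCoeffs (f : R⸨X⸩) (k : ℤ) : (oddCoeffs f).coeff k = f.coeff (2 * k + 1) :=
  rfl

theorem oddCoeffs_add (f g : R⸨X⸩) : oddCoeffs (f + g) = oddCoeffs f + oddCoeffs g := by
  ext k
  simp

theorem oddCoeffs_single_mul (i : ℤ) (c : R) (f : R⸨X⸩) :
    oddCoeffs (single (2 * i) c * f) = single i c * oddCoeffs f := by
  ext k
  have h₁ : 2 * k + 1 = (2 * (k - i) + 1) + 2 * i := by ring
  have h₂ : k = (k - i) + i := by ring
  rw [coeff_oddCoeffs, h₁, coeff_single_mul_add, h₂, coeff_single_mul_add, coeff_oddCoeffs]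
  simp

end Semiring

section CommSemiring

variable {R : Type*} [CommSemiring R]

theorem algebraMap_monomial (j : ℕ) (c : R) :
    algebraMap R[X] R⸨X⸩ (monomial j c) = single (j : ℤ) c := by
  ext k
  rw [algebraMap_hahnSeries_apply, PowerSeries.coeff_coe, coeff_coe, coeff_monomial, coeff_single]
  split_ifs <;> first | rfl | omega

theorem oddCoeffs_expand_mul (p : R[X]) (f : R⸨X⸩) :
    oddCoeffs (algebraMap R[X] R⸨X⸩ (expand R 2 p) * f) =
      algebraMap R[X] R⸨X⸩ p * oddCoeffs f := by
  induction p using Polynomial.induction_on' with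
  | add p q hp hq => rw [map_add, map_add, add_mul, oddCoeffs_add, hp, hq, map_add, add_mul]
  | monomial j c =>
    rw [expand_monomial, algebraMap_monomial, algebraMap_monomial, Nat.cast_mul, Nat.cast_two,
      mul_comm (j : ℤ), oddCoeffs_single_mul]

theorem oddCoeffs_algebraMap (p : R[X]) :
    oddCoeffs (algebraMap R[X] R⸨X⸩ p) = algebraMap R[X] R⸨X⸩ (contract 2 p.divX) := by
  ext k
  simp only [coeff_oddCoeffs, algebraMap_hahnSeries_apply, PowerSeries.coeff_coe, coeff_coe,
    coeff_contract two_ne_zero, coeff_divX]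
  split_ifs <;> first | rfl | (congr 1; omega)

end CommSemiring

end LaurentSeries

theorem Polynomial.X_pow_mul_prod_X_pow_sub_one_dvd_expand {R ι : Type*} [CommRing R]
    (t : Finset ι) (m : ι → ℕ) (s : ℕ) {p : ℕ} (hp : p ≠ 0) :
    X ^ s * ∏ i ∈ t, (X ^ m i - 1 : R[X]) ∣
      expand R p (X ^ s * ∏ i ∈ t, (X ^ m i - 1)) := by
  rw [map_mul, map_pow, map_prod, expand_X]
  refine mul_dvd_mul (pow_dvd_pow_of_dvd (dvd_pow_self X hp) s)
    (Finset.prod_dvd_prod_of_dvd _ _ fun i _ => ?_)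
  rw [map_sub, map_pow, expand_X, map_one, ← pow_mul, mul_comm, pow_mul]
  simpa using sub_dvd_pow_sub_pow (X ^ m i : R[X]) 1 p

namespace RatFunc

variable {K : Type*} [Field K]

theorem exists_eq_div_of_coe_eq_oddCoeffs {g : K[X]} (hg₀ : g ≠ 0) (hg : g ∣ expand K 2 g)
    {P : K[X]} {S : RatFunc K}
    (hS : (S : K⸨X⸩) =
      LaurentSeries.oddCoeffs (algebraMap K[X] (RatFunc K) P / algebraMap K[X] (RatFunc K) g)) :
    ∃ P' : K[X], S = algebraMap K[X] (RatFunc K) P' / algebraMap K[X] (RatFunc K) g := by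
  obtain ⟨h, hgh⟩ := hg
  refine ⟨contract 2 (h * P).divX, (algebraMap (RatFunc K) K⸨X⸩).injective ?_⟩
  simp only [hS, algebraMap_apply_div]
  set ι := algebraMap K[X] K⸨X⸩
  have hι : ι g ≠ 0 := (map_ne_zero_iff _ (algebraMap_hahnSeries_injective ℤ)).2 hg₀
  have hclear : ι (expand K 2 g) * (ι P / ι g) = ι (h * P) := by
    rw [hgh, map_mul, map_mul]
    field_simp
  rw [eq_div_iff hι, mul_comm, ← LaurentSeries.oddCoeffs_expand_mul, hclear,
    LaurentSeries.oddCoeffs_algebraMap]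

end RatFunc

theorem stmt_9 (F : RatFunc ℂ → RatFunc ℂ)
    (hF : ∀ R : RatFunc ℂ, ∀ k : ℤ, coeffL (F R) k = coeffL R (2 * k + 1))
    (n : ℕ) (m : Fin n → ℕ) (hpos : ∀ k, 0 < m k)
    (R : RatFunc ℂ)
    (hR : IsLaurentOver (∏ k, (Polynomial.X ^ m k - 1)) R) :
    IsLaurentOver (∏ k, (Polynomial.X ^ m k - 1)) (F R) := by
  obtain ⟨P, s, rfl⟩ := hR
  set g : ℂ[X] := X ^ s * ∏ k, (X ^ m k - 1)
  have hg₀ : g ≠ 0 := mul_ne_zero (pow_ne_zero _ X_ne_zero) <|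
    Finset.prod_ne_zero_iff.2 fun k _ => by simpa using X_pow_sub_C_ne_zero (hpos k) (1 : ℂ)
  have hden : RatFunc.X ^ s * algebraMap ℂ[X] (RatFunc ℂ) (∏ k, (X ^ m k - 1)) =
      algebraMap ℂ[X] (RatFunc ℂ) g := by
    rw [map_mul, map_pow, RatFunc.algebraMap_X]
  obtain ⟨P', hP'⟩ := RatFunc.exists_eq_div_of_coe_eq_oddCoeffs hg₀
    (X_pow_mul_prod_X_pow_sub_one_dvd_expand _ m s two_ne_zero) (HahnSeries.ext (funext (hF _)))
  refine ⟨P', s, ?_⟩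
  rw [hden]
  exact hP'
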